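/- arXiv:2302.04067 — 3 statements merged into one kernel-verified Lean document; each statement's English description precedes it below -/
import Mathlib

section
/- The coefficient sequence of the Gaussian polynomial binom{11}{3}_q has equal consecutive coefficients at positions 10 and 11: p_{10}(8,3) = p_{11}(8,3) = 12, even though 11 < ⌊8·3/2⌋ = 12. -/
/-!
Since `3 ∣ 9`, `2 ∣ 10` and `1 ∣ 11`, each factor of `binom{11}{3}_q` is a geometric sum:
`binom{11}{3}_q = (1 + q³ + q⁶)(1 + q² + ⋯ + q⁸)(1 + q + ⋯ + q¹⁰)`.
So `p_k(8,3)` counts the triples `(a, b, c) ∈ [0,3) × [0,5) × [0,11)` with `3a + 2b + c = k`,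
and there are twelve of them both for `k = 10` and for `k = 11`.
-/

/-- The coefficient of `q^k` in the Gaussian polynomial (q-binomial coefficient)
`binom{ℓ+m}{m}_q = ∏_{i=1}^m (1-q^(ℓ+i))/(1-q^i)`, computed in `ℚ⟦q⟧`. -/
noncomputable def gaussCoeff (ℓ m k : ℕ) : ℚ :=
  PowerSeries.coeff (R := ℚ) k
    ((∏ i ∈ Finset.range m, (1 - (PowerSeries.X : PowerSeries ℚ) ^ (ℓ + i + 1))) *
     (∏ i ∈ Finset.range m, (1 - (PowerSeries.X : PowerSeries ℚ) ^ (i + 1)))⁻¹)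

open PowerSeries Finset

theorem gaussCoeff_eq_coeff_of_mul_eq {ℓ m : ℕ} {P : ℚ⟦X⟧}
    (h : P * ∏ i ∈ range m, (1 - (X : ℚ⟦X⟧) ^ (i + 1)) = ∏ i ∈ range m, (1 - X ^ (ℓ + i + 1)))
    (k : ℕ) : gaussCoeff ℓ m k = coeff k P := by
  have hD : constantCoeff (∏ i ∈ range m, (1 - (X : ℚ⟦X⟧) ^ (i + 1))) ≠ 0 := by simp
  rw [gaussCoeff, ← (eq_mul_inv_iff_mul_eq hD).2 h]

theorem coeff_mul_geom_sums {R : Type*} [Semiring R] (a b c n₁ n₂ n₃ k : ℕ) :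
    coeff k ((∑ i ∈ range n₁, ((X : R⟦X⟧) ^ a) ^ i) * (∑ j ∈ range n₂, ((X : R⟦X⟧) ^ b) ^ j) *
        ∑ l ∈ range n₃, ((X : R⟦X⟧) ^ c) ^ l) =
      #{x ∈ range n₁ ×ˢ range n₂ ×ˢ range n₃ | k = a * x.1 + b * x.2.1 + c * x.2.2} := by
  have h : (∑ i ∈ range n₁, ((X : R⟦X⟧) ^ a) ^ i) * (∑ j ∈ range n₂, ((X : R⟦X⟧) ^ b) ^ j) *
      ∑ l ∈ range n₃, ((X : R⟦X⟧) ^ c) ^ l =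
      ∑ x ∈ range n₁ ×ˢ range n₂ ×ˢ range n₃, X ^ (a * x.1 + b * x.2.1 + c * x.2.2) := by
    rw [sum_mul_sum]
    simp only [sum_product, sum_mul, mul_sum, ← pow_mul, ← pow_add]
    exact sum_comm.trans (sum_congr rfl fun _ _ => sum_comm)
  rw [h, map_sum]
  simp only [coeff_X_pow, sum_boole]

theorem geom_sums_mul_prod_eq_prod_eight_three :
    (∑ i ∈ range 3, ((X : ℚ⟦X⟧) ^ 3) ^ i) * (∑ j ∈ range 5, ((X : ℚ⟦X⟧) ^ 2) ^ j) *
        (∑ l ∈ range 11, ((X : ℚ⟦X⟧) ^ 1) ^ l) * ∏ i ∈ range 3, (1 - (X : ℚ⟦X⟧) ^ (i + 1)) =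
      ∏ i ∈ range 3, (1 - (X : ℚ⟦X⟧) ^ (8 + i + 1)) := by
  simp only [prod_range_succ, prod_range_zero, one_mul]
  rw [show (X : ℚ⟦X⟧) ^ (8 + 0 + 1) = (X ^ 3) ^ 3 by ring,
    show (X : ℚ⟦X⟧) ^ (8 + 1 + 1) = (X ^ 2) ^ 5 by ring,
    show (X : ℚ⟦X⟧) ^ (8 + 2 + 1) = (X ^ 1) ^ 11 by ring,
    ← geom_sum_mul_neg (X ^ 3) 3, ← geom_sum_mul_neg (X ^ 2) 5, ← geom_sum_mul_neg (X ^ 1) 11]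
  ring

/-- binom{11}{3}_q has equal coefficients 12 at positions 10 and 11, with 11 < ⌊8·3/2⌋. -/
theorem coeff_eq_at_10_11 :
    gaussCoeff 8 3 10 = 12 ∧ gaussCoeff 8 3 11 = 12 ∧ 11 < 8 * 3 / 2 := by
  simp only [gaussCoeff_eq_coeff_of_mul_eq geom_sums_mul_prod_eq_prod_eight_three,
    coeff_mul_geom_sums]
  refine ⟨?_, ?_, by norm_num⟩ <;> norm_cast
end

section
/- For all integers ℓ ≥ 1 and all k with 1 ≤ k ≤ ⌊3ℓ/2⌋ - 4, the coefficients of binom{ℓ+3}{3}_q satisfy the strict inequality p_{k+1}(ℓ,3) - p_k(ℓ,3) ≥ 1, with no exceptions. -/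
/-!
Multiplying by `1 - q` turns the coefficient differences of `binom{ℓ+3}{3}_q` into the coefficients
of `N(q) / ((1 - q²)(1 - q³))` with `N(q) = (1 - q^(ℓ+1))(1 - q^(ℓ+2))(1 - q^(ℓ+3))`. Below degree
`2ℓ + 3` only `1 - q^(ℓ+1)(1 + q + q²)` of `N` is seen, and `(1 + q + q²) / ((1 - q²)(1 - q³))`
has coefficients `⌊t/2⌋ + 1`. So `p_{k+1} - p_k = d(k+1) - ⌊(k-ℓ)/2⌋ - 1` (the last two terms only
when `k ≥ ℓ`), where `d(n) = ⌊(n+2)/2⌋ - ⌊(n+2)/3⌋` counts partitions of `n` into parts 2 and 3,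
and `k ≤ 3ℓ/2 - 4` keeps this at least `1`.
-/

open PowerSeries Finset

theorem coeff_succ_sub_coeff {R : Type*} [CommRing R] (f : R⟦X⟧) (k : ℕ) :
    coeff (k + 1) f - coeff k f = coeff (k + 1) ((1 - X) * f) := by
  rw [sub_mul, one_mul, map_sub, coeff_succ_X_mul]

theorem one_sub_X_mul_inv_prod {K : Type*} [Field K] (m : ℕ) :
    (1 - X : K⟦X⟧) * (∏ i ∈ range (m + 1), (1 - X ^ (i + 1)))⁻¹ =
      (∏ i ∈ range m, (1 - X ^ (i + 2)))⁻¹ := by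
  have hX : constantCoeff (1 - X : K⟦X⟧) ≠ 0 := by simp
  rw [prod_range_succ', PowerSeries.mul_inv_rev, zero_add, pow_one, ← mul_assoc,
    PowerSeries.mul_inv_cancel _ hX, one_mul]

theorem gaussCoeff_succ_sub_gaussCoeff (ℓ m k : ℕ) :
    gaussCoeff ℓ (m + 1) (k + 1) - gaussCoeff ℓ (m + 1) k =
      coeff (k + 1) ((∏ i ∈ range (m + 1), (1 - X ^ (ℓ + i + 1))) *
        (∏ i ∈ range m, (1 - X ^ (i + 2) : ℚ⟦X⟧))⁻¹) := by
  rw [gaussCoeff, gaussCoeff, coeff_succ_sub_coeff, mul_left_comm, one_sub_X_mul_inv_prod]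

/-- Closed form of the number of partitions of `n` into parts `2` and `3`. -/
def twoThreePartitionCount (n : ℕ) : ℕ := (n + 2) / 2 - (n + 2) / 3

noncomputable def twoThreeSeries : ℚ⟦X⟧ := mk fun n => (twoThreePartitionCount n : ℚ)

theorem mul_twoThreeSeries : ((1 - X ^ 2) * (1 - X ^ 3) : ℚ⟦X⟧) * twoThreeSeries = 1 := by
  suffices twoThreeSeries + X ^ 5 * twoThreeSeries =
      1 + X ^ 2 * twoThreeSeries + X ^ 3 * twoThreeSeries by linear_combination this
  ext n
  simp only [map_add, coeff_X_pow_mul', coeff_one, twoThreeSeries, coeff_mk]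
  split_ifs <;> norm_cast <;> unfold twoThreePartitionCount <;> omega

theorem inv_prod_eq_twoThreeSeries :
    (∏ i ∈ range 2, (1 - X ^ (i + 2) : ℚ⟦X⟧))⁻¹ = twoThreeSeries := by
  symm
  rw [PowerSeries.eq_inv_iff_mul_eq_one (by simp), prod_range_succ, prod_range_one, mul_comm]
  exact mul_twoThreeSeries

theorem twoThreePartitionCount_window (n : ℕ) (hn : 2 ≤ n) :
    twoThreePartitionCount n + twoThreePartitionCount (n - 1) + twoThreePartitionCount (n - 2) =
      n / 2 + 1 := by
  obtain ⟨q, r, hr, rfl⟩ : ∃ q r, r < 6 ∧ n = 6 * q + r := ⟨n / 6, n % 6, by omega, by omega⟩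
  unfold twoThreePartitionCount
  interval_cases r <;> omega

theorem one_add_X_add_X_sq_mul_twoThreeSeries :
    (1 + X + X ^ 2 : ℚ⟦X⟧) * twoThreeSeries = mk fun n => ((n / 2 + 1 : ℕ) : ℚ) := by
  ext n
  have hexpand : (1 + X + X ^ 2 : ℚ⟦X⟧) * twoThreeSeries =
      twoThreeSeries + X ^ 1 * twoThreeSeries + X ^ 2 * twoThreeSeries := by ring
  rw [hexpand]
  simp only [map_add, coeff_X_pow_mul', twoThreeSeries, coeff_mk]
  split_ifs with h1 h2 <;> norm_cast
  · exact twoThreePartitionCount_window n h2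
  all_goals interval_cases n <;> rfl

theorem coeff_numerator_mul_twoThreeSeries (ℓ n : ℕ) (hn : n < 2 * ℓ + 3) :
    coeff n ((∏ i ∈ range 3, (1 - X ^ (ℓ + i + 1) : ℚ⟦X⟧)) * twoThreeSeries) =
      twoThreePartitionCount n - ((if ℓ + 1 ≤ n then (n - (ℓ + 1)) / 2 + 1 else 0 : ℕ) : ℚ) := by
  have hexpand : (∏ i ∈ range 3, (1 - X ^ (ℓ + i + 1) : ℚ⟦X⟧)) * twoThreeSeries =
      twoThreeSeries - X ^ (ℓ + 1) * ((1 + X + X ^ 2) * twoThreeSeries) +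
        X ^ (2 * ℓ + 3) * ((1 + X + X ^ 2 - X ^ (ℓ + 3)) * twoThreeSeries) := by
    simp only [prod_range_succ, prod_range_zero]
    ring
  rw [hexpand, one_add_X_add_X_sq_mul_twoThreeSeries]
  simp only [map_add, map_sub, coeff_X_pow_mul', twoThreeSeries, coeff_mk,
    if_neg (show ¬ 2 * ℓ + 3 ≤ n by omega), add_zero, Nat.cast_ite, Nat.cast_zero]

theorem lt_twoThreePartitionCount_succ (ℓ k : ℕ) (h1 : 1 ≤ k) (h2 : k ≤ 3 * ℓ / 2 - 4) :
    (if ℓ + 1 ≤ k + 1 then (k + 1 - (ℓ + 1)) / 2 + 1 else 0) < twoThreePartitionCount (k + 1) := by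
  unfold twoThreePartitionCount
  split_ifs <;> omega

theorem one_strict_m3_general (ℓ : ℕ) (k : ℕ) (h1 : 1 ≤ k)
    (h2 : k ≤ 3 * ℓ / 2 - 4) :
    gaussCoeff ℓ 3 (k + 1) - gaussCoeff ℓ 3 k ≥ 1 := by
  rw [gaussCoeff_succ_sub_gaussCoeff, inv_prod_eq_twoThreeSeries,
    coeff_numerator_mul_twoThreeSeries ℓ (k + 1) (by omega), ge_iff_le, le_sub_iff_add_le']
  exact_mod_cast lt_twoThreePartitionCount_succ ℓ k h1 h2

theorem one_strict_m3 (ℓ : ℕ) (hℓ : 1 ≤ ℓ) (k : ℕ) (h1 : 1 ≤ k)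
    (h2 : k ≤ 3 * ℓ / 2 - 4) :
    gaussCoeff ℓ 3 (k + 1) - gaussCoeff ℓ 3 k ≥ 1 :=
  one_strict_m3_general ℓ k h1 h2
end

section
/- For all integers ℓ ≥ 1 and all k with 13 ≤ k ≤ ⌊3ℓ/2⌋ - 10, the coefficients of binom{ℓ+3}{3}_q satisfy p_{k+1}(ℓ,3) - p_k(ℓ,3) ≥ 3, with no exceptions. -/
open PowerSeries Finset

lemma coeff_succ_one_sub_X_mul {R : Type*} [CommRing R] (n : ℕ) (φ : R⟦X⟧) :
    coeff (n + 1) ((1 - X) * φ) = coeff (n + 1) φ - coeff n φ := by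
  rw [sub_mul, one_mul, map_sub, coeff_succ_X_mul]

lemma gaussCoeff_succ_sub (ℓ m k : ℕ) :
    gaussCoeff ℓ (m + 1) (k + 1) - gaussCoeff ℓ (m + 1) k =
      coeff (k + 1) ((∏ i ∈ range (m + 1), (1 - (X : ℚ⟦X⟧) ^ (ℓ + i + 1))) *
        (∏ i ∈ range m, (1 - (X : ℚ⟦X⟧) ^ (i + 2)))⁻¹) := by
  have hX : (1 - X : ℚ⟦X⟧) * (1 - X)⁻¹ = 1 :=
    PowerSeries.mul_inv_cancel _ (by simp)
  rw [gaussCoeff, gaussCoeff, ← coeff_succ_one_sub_X_mul,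
    prod_range_succ' (fun i => 1 - (X : ℚ⟦X⟧) ^ (i + 1)) m, PowerSeries.mul_inv_rev]
  congr 1
  simp only [zero_add, pow_one]
  linear_combination (∏ i ∈ range (m + 1), (1 - (X : ℚ⟦X⟧) ^ (ℓ + i + 1))) *
    (∏ i ∈ range m, (1 - (X : ℚ⟦X⟧) ^ (i + 1 + 1)))⁻¹ * hX

/-- The number of partitions of `n` into parts `2` and `3`. -/
def partsTwoThree (n : ℕ) : ℕ := n / 6 + if n % 6 = 1 then 0 else 1

lemma partsTwoThree_add_five (n : ℕ) :
    partsTwoThree (n + 5) + partsTwoThree n = partsTwoThree (n + 3) + partsTwoThree (n + 2) := by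
  unfold partsTwoThree
  split_ifs <;> omega

noncomputable def partsTwoThreeSeries : ℚ⟦X⟧ := mk fun n => (partsTwoThree n : ℚ)

lemma partsTwoThreeSeries_mul_eq_one : partsTwoThreeSeries * ((1 - X ^ 2) * (1 - X ^ 3)) = 1 := by
  rw [show partsTwoThreeSeries * ((1 - X ^ 2) * (1 - X ^ 3)) = partsTwoThreeSeries
      - partsTwoThreeSeries * X ^ 2 - partsTwoThreeSeries * X ^ 3
      + partsTwoThreeSeries * X ^ 5 by ring]
  ext n
  simp only [map_sub, map_add, coeff_mul_X_pow', partsTwoThreeSeries, coeff_mk, coeff_one]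
  rcases n with _ | _ | _ | _ | _ | n
  iterate 5 norm_num [partsTwoThree]
  rw [show n + 1 + 1 + 1 + 1 + 1 = n + 5 by omega]
  simp only [le_add_iff_nonneg_left, zero_le, if_true, Nat.add_sub_cancel]
  rw [if_neg (by omega), show n + 5 - 2 = n + 3 by omega, show n + 5 - 3 = n + 2 by omega]
  have h := partsTwoThree_add_five n
  qify at h
  linear_combination h

lemma inv_prod_eq_partsTwoThreeSeries :
    (∏ i ∈ range 2, (1 - (X : ℚ⟦X⟧) ^ (i + 2)))⁻¹ = partsTwoThreeSeries := by
  rw [PowerSeries.inv_eq_iff_mul_eq_one (by simp [prod_range_succ])]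
  simpa [prod_range_succ] using partsTwoThreeSeries_mul_eq_one

lemma prod_range_three_one_sub_pow {R : Type*} [CommRing R] (x : R) (ℓ : ℕ) :
    ∏ i ∈ range 3, (1 - x ^ (ℓ + i + 1)) = 1 - x ^ (ℓ + 1) - x ^ (ℓ + 2) - x ^ (ℓ + 3)
      + x ^ (2 * ℓ + 3) * (1 + x + x ^ 2 - x ^ (ℓ + 3)) := by
  simp only [prod_range_succ, prod_range_zero]
  ring

lemma gaussCoeff_three_succ_sub (ℓ k : ℕ) (hk : k + 1 < 2 * ℓ + 3) :
    gaussCoeff ℓ 3 (k + 1) - gaussCoeff ℓ 3 k = (partsTwoThree (k + 1) : ℚ)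
      - (if ℓ + 1 ≤ k + 1 then (partsTwoThree (k + 1 - (ℓ + 1)) : ℚ) else 0)
      - (if ℓ + 2 ≤ k + 1 then (partsTwoThree (k + 1 - (ℓ + 2)) : ℚ) else 0)
      - (if ℓ + 3 ≤ k + 1 then (partsTwoThree (k + 1 - (ℓ + 3)) : ℚ) else 0) := by
  rw [gaussCoeff_succ_sub, inv_prod_eq_partsTwoThreeSeries, prod_range_three_one_sub_pow]
  simp only [sub_mul, add_mul, one_mul, mul_assoc, map_sub, map_add, coeff_X_pow_mul',
    if_neg (show ¬2 * ℓ + 3 ≤ k + 1 by omega), partsTwoThreeSeries, coeff_mk, add_zero]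

lemma three_add_partsTwoThree_le (ℓ n : ℕ) (h1 : 14 ≤ n) (h2 : n ≤ 3 * ℓ / 2 - 9) :
    3 + (if ℓ + 1 ≤ n then partsTwoThree (n - (ℓ + 1)) else 0)
      + (if ℓ + 2 ≤ n then partsTwoThree (n - (ℓ + 2)) else 0)
      + (if ℓ + 3 ≤ n then partsTwoThree (n - (ℓ + 3)) else 0) ≤ partsTwoThree n := by
  unfold partsTwoThree
  split_ifs <;> omega

theorem three_strict_m3_general (ℓ : ℕ) (k : ℕ) (h1 : 13 ≤ k)
    (h2 : k ≤ 3 * ℓ / 2 - 10) :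
    gaussCoeff ℓ 3 (k + 1) - gaussCoeff ℓ 3 k ≥ 3 := by
  rw [gaussCoeff_three_succ_sub ℓ k (by omega)]
  have hgap := three_add_partsTwoThree_le ℓ (k + 1) (by omega) (by omega)
  split_ifs at hgap ⊢ <;> · qify at hgap; linarith

theorem three_strict_m3 (ℓ : ℕ) (hℓ : 1 ≤ ℓ) (k : ℕ) (h1 : 13 ≤ k)
    (h2 : k ≤ 3 * ℓ / 2 - 10) :
    gaussCoeff ℓ 3 (k + 1) - gaussCoeff ℓ 3 k ≥ 3 :=
  three_strict_m3_general ℓ k h1 h2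
end
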